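/- arXiv:2502.12118 — 4 statements merged into one kernel-verified Lean document; each statement's English description precedes it below -/
import Mathlib

section
/- Let A be an almost surely non-negative random variable with mean μ and variance σ². Then for any θ ≥ 0, E[θ(μ - A)/(σ + θA)] ≤ 2θ². -/
open MeasureTheory

/-- If `A` is an almost surely non-negative random variable with mean `m` and
variance `s²` (with `s > 0`), then for any `θ ≥ 0`,
`E[θ(m - A)/(s + θA)] ≤ 2θ²`. -/
theorem stmt_0 {Ω : Type*} [MeasurableSpace Ω] (μ : Measure Ω) [IsProbabilityMeasure μ]
    (A : Ω → ℝ) (hAmeas : Measurable A) (hApos : ∀ᵐ ω ∂μ, 0 ≤ A ω)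
    (m s θ : ℝ) (hs : 0 < s) (hθ : 0 ≤ θ)
    (hA1 : Integrable A μ) (hA2 : Integrable (fun ω => (A ω) ^ 2) μ)
    (hmean : ∫ ω, A ω ∂μ = m)
    (hvar : ∫ ω, (A ω - m) ^ 2 ∂μ = s ^ 2)
    (hint : Integrable (fun ω => θ * (m - A ω) / (s + θ * A ω)) μ) :
    ∫ ω, θ * (m - A ω) / (s + θ * A ω) ∂μ ≤ 2 * θ ^ 2 := by
  have hm0 : 0 ≤ m := by
    rw [← hmean]; exact integral_nonneg_of_ae hApos
  have hsθm : 0 < s + θ * m := by positivity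
  set a : ℝ := θ*m/s - θ^2*m^2/(s*(s+θ*m)) + θ^2*m^2/s^2 with ha
  set b : ℝ := -(θ/s) + θ^2*m/(s*(s+θ*m)) - 2*θ^2*m/s^2 with hb
  set c : ℝ := θ^2/s^2 with hc
  have hg_int : Integrable (fun ω => a + b * A ω + c * (A ω)^2) μ :=
    ((integrable_const a).add (hA1.const_mul b)).add (hA2.const_mul c)
  have hle : ∀ᵐ ω ∂μ, θ * (m - A ω) / (s + θ * A ω) ≤ a + b * A ω + c * (A ω)^2 := by
    filter_upwards [hApos] with ω hω
    set x := A ω with hx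
    have hsx : 0 < s + θ * x := by positivity
    have hkey : a + b*x + c*x^2 - θ*(m-x)/(s+θ*x)
        = θ^2*(x-m)^2*(s*θ*m + s*θ*x + θ^2*x*m) / (s^2*(s+θ*x)*(s+θ*m)) := by
      rw [ha, hb, hc]
      field_simp
      ring
    nlinarith [div_nonneg (by positivity : (0:ℝ) ≤ θ^2*(x-m)^2*(s*θ*m + s*θ*x + θ^2*x*m))
      (by positivity : (0:ℝ) ≤ s^2*(s+θ*x)*(s+θ*m)), hkey]
  have hA2val : ∫ ω, (A ω)^2 ∂μ = s^2 + m^2 := by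
    have hexp : (fun ω => (A ω - m)^2) = fun ω => ((A ω)^2 - (2*m) * A ω) + m^2 := by
      funext ω; ring
    rw [hexp] at hvar
    have hi1 : Integrable (fun ω => A ω ^ 2 - 2 * m * A ω) μ :=
      hA2.sub (hA1.const_mul (2*m))
    rw [integral_add hi1 (integrable_const _),
      integral_sub hA2 (hA1.const_mul (2*m)), integral_const_mul, hmean,
      integral_const, probReal_univ] at hvar
    simp at hvar
    linarith
  have hgval : ∫ ω, (a + b * A ω + c * (A ω)^2) ∂μ = θ^2 := by
    have hi2 : Integrable (fun ω => a + b * A ω) μ :=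
      (integrable_const a).add (hA1.const_mul b)
    rw [integral_add hi2 (hA2.const_mul c),
      integral_add (integrable_const a) (hA1.const_mul b),
      integral_const_mul, integral_const_mul, hmean, hA2val,
      integral_const, probReal_univ]
    simp only [ENNReal.toReal_one, smul_eq_mul, one_mul]
    rw [ha, hb, hc]
    field_simp
    ring
  calc ∫ ω, θ * (m - A ω) / (s + θ * A ω) ∂μ
      ≤ ∫ ω, (a + b * A ω + c * (A ω)^2) ∂μ := integral_mono_ae hint hg_int hle
    _ = θ^2 := hgval
    _ ≤ 2 * θ^2 := by nlinarith [sq_nonneg θ]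
end

section
/- Let A, B ≥ 0 and κ, H > 0 be reals satisfying (A - B)² ≤ (H²/4)(A + B)κ. Then A ≥ B - H·sqrt(κB/2) and A ≤ B + H·sqrt(κB/2) + κH²/4. -/
/-! With `d = A - B`, `c = κH²/4` and `t = H·√(κB/2)` (so `t² = 2cB`), the hypothesis reads
`d² ≤ c·d + t²`. For `d < 0` this gives `d² ≤ t²`, hence `-t ≤ d`; for `d > c + t` it would give
`t² ≥ d(d - c) > (c + t)·t ≥ t²`. -/

theorem neg_le_and_le_add_of_sq_le_mul_add_sq {x c t : ℝ} (hc : 0 ≤ c) (ht : 0 ≤ t)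
    (h : x ^ 2 ≤ c * x + t ^ 2) : -t ≤ x ∧ x ≤ c + t := by
  constructor
  · rcases le_or_gt 0 x with hx | hx
    · linarith
    · exact (abs_le_of_sq_le_sq' (by nlinarith) ht).1
  · by_contra! hx
    nlinarith [mul_le_mul_of_nonneg_right hx.le ht]

theorem stmt_3_general (A B κ H : ℝ) (hB : 0 ≤ B) (hκ : 0 < κ) (hH : 0 < H)
    (h : (A - B) ^ 2 ≤ (H ^ 2 / 4) * (A + B) * κ) :
    B - H * Real.sqrt (κ * B / 2) ≤ A ∧
      A ≤ B + H * Real.sqrt (κ * B / 2) + κ * H ^ 2 / 4 := by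
  have hsq : Real.sqrt (κ * B / 2) ^ 2 = κ * B / 2 := Real.sq_sqrt (by positivity)
  have hquad : (A - B) ^ 2 ≤ κ * H ^ 2 / 4 * (A - B) + (H * Real.sqrt (κ * B / 2)) ^ 2 := by
    rw [mul_pow, hsq]
    linarith
  obtain ⟨hlower, hupper⟩ :=
    neg_le_and_le_add_of_sq_le_mul_add_sq (by positivity) (by positivity) hquad
  constructor <;> linarith

/-- Key quadratic inequality: if `A, B ≥ 0`, `κ, H > 0` and
`(A - B)² ≤ (H²/4)(A + B)κ`, then
`B - H·√(κB/2) ≤ A ≤ B + H·√(κB/2) + κH²/4`. -/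
theorem stmt_3 (A B κ H : ℝ) (hA : 0 ≤ A) (hB : 0 ≤ B) (hκ : 0 < κ) (hH : 0 < H)
    (h : (A - B) ^ 2 ≤ (H ^ 2 / 4) * (A + B) * κ) :
    B - H * Real.sqrt (κ * B / 2) ≤ A ∧
      A ≤ B + H * Real.sqrt (κ * B / 2) + κ * H ^ 2 / 4 :=
  stmt_3_general A B κ H hB hκ hH h
end

section
/- Let Q be a probability distribution over a finite trajectory set, r a reward with 0 ≤ r ≤ H, mean μ > 0 and variance σ² > 0. For any ε with 0 ≤ ε ≤ σ²/μ², there exists a distribution P with χ²(P‖Q) ≤ ε and E_P[r] ≥ E_Q[r] + σ·√ε. Moreover, for any distribution P with χ²(P‖Q) ≤ ε one has E_P[r] ≤ E_Q[r] + σ·√ε; hence sup over the χ²-ball of E_P[r] equals μ + σ√ε. -/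
open Finset

/-- Characterization of the optimal value within a χ²-ball. For a pmf `Q` on a
finite trajectory set with a reward `0 ≤ r ≤ H`, mean `μ > 0` and variance
`σ² > 0`, and any `0 ≤ ε ≤ σ²/μ²`: there exists a pmf `P` with `χ²(P‖Q) ≤ ε`
and `E_P[r] ≥ μ + σ√ε`, while every pmf `P` with `χ²(P‖Q) ≤ ε` satisfies
`E_P[r] ≤ μ + σ√ε`; hence the supremum over the χ²-ball equals `μ + σ√ε`.
Here `χ²(P‖Q) = Σ_τ (P(τ)-Q(τ))²/Q(τ)`. -/
theorem stmt_10 {T : Type*} [Fintype T]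
    (Q : T → ℝ) (hQ0 : ∀ τ, 0 < Q τ) (hQ1 : ∑ τ, Q τ = 1)
    (r : T → ℝ) (H : ℝ) (hr : ∀ τ, 0 ≤ r τ ∧ r τ ≤ H)
    (μ σ : ℝ)
    (hμ : μ = ∑ τ, Q τ * r τ) (hμpos : 0 < μ)
    (hσ : σ ^ 2 = ∑ τ, Q τ * (r τ - μ) ^ 2) (hσpos : 0 < σ)
    (ε : ℝ) (hε0 : 0 ≤ ε) (hε : ε ≤ σ ^ 2 / μ ^ 2) :
    (∃ P : T → ℝ, (∀ τ, 0 ≤ P τ) ∧ (∑ τ, P τ) = 1 ∧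
        (∑ τ, (P τ - Q τ) ^ 2 / Q τ) ≤ ε ∧
        μ + σ * Real.sqrt ε ≤ ∑ τ, P τ * r τ) ∧
    (∀ P : T → ℝ, (∀ τ, 0 ≤ P τ) → (∑ τ, P τ) = 1 →
        (∑ τ, (P τ - Q τ) ^ 2 / Q τ) ≤ ε →
        (∑ τ, P τ * r τ) ≤ μ + σ * Real.sqrt ε) := by
  have hsε : (Real.sqrt ε) ^ 2 = ε := Real.sq_sqrt hε0
  have hsε0 : 0 ≤ Real.sqrt ε := Real.sqrt_nonneg ε
  -- centered first moment is zero
  have h1 : ∑ τ, Q τ * (r τ - μ) = 0 := by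
    have : ∑ τ, Q τ * (r τ - μ) = (∑ τ, Q τ * r τ) - μ * ∑ τ, Q τ := by
      rw [Finset.mul_sum, ← Finset.sum_sub_distrib]
      exact Finset.sum_congr rfl fun τ _ => by ring
    rw [this, hQ1, ← hμ]; ring
  -- second "mixed" moment
  have h2 : ∑ τ, Q τ * (r τ - μ) * r τ = σ ^ 2 := by
    have : ∑ τ, Q τ * (r τ - μ) * r τ
        = (∑ τ, Q τ * (r τ - μ) ^ 2) + μ * ∑ τ, Q τ * (r τ - μ) := by
      rw [Finset.mul_sum, ← Finset.sum_add_distrib]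
      exact Finset.sum_congr rfl fun τ _ => by ring
    rw [this, h1, ← hσ]; ring
  have hsεμ : Real.sqrt ε * μ ≤ σ := by
    have hεμ : ε * μ ^ 2 ≤ σ ^ 2 :=
      (le_div_iff₀ (by positivity)).1 hε
    nlinarith [sq_nonneg (Real.sqrt ε * μ - σ), mul_nonneg hsε0 hμpos.le]
  constructor
  · refine ⟨fun τ => Q τ * (1 + Real.sqrt ε * (r τ - μ) / σ), fun τ => ?_, ?_, ?_, ?_⟩
    · have h0 : 0 ≤ 1 + Real.sqrt ε * (r τ - μ) / σ := by
        have hrτ := (hr τ).1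
        have heq : 1 + Real.sqrt ε * (r τ - μ) / σ
            = (σ + Real.sqrt ε * (r τ - μ)) / σ := by field_simp
        rw [heq]
        apply div_nonneg _ hσpos.le
        nlinarith [mul_nonneg hsε0 hrτ]
      exact mul_nonneg (hQ0 τ).le h0
    · have : ∀ τ, Q τ * (1 + Real.sqrt ε * (r τ - μ) / σ)
          = Q τ + (Real.sqrt ε / σ) * (Q τ * (r τ - μ)) := fun τ => by
        field_simp
      simp_rw [this, Finset.sum_add_distrib, ← Finset.mul_sum, h1, hQ1]; ring
    · have : ∀ τ, (Q τ * (1 + Real.sqrt ε * (r τ - μ) / σ) - Q τ) ^ 2 / Q τ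
          = (ε / σ ^ 2) * (Q τ * (r τ - μ) ^ 2) := fun τ => by
        have hq := (hQ0 τ).ne'
        have hs := hσpos.ne'
        field_simp
        ring_nf
        rw [hsε]
        ring
      rw [Finset.sum_congr rfl fun τ _ => this τ, ← Finset.mul_sum, ← hσ]
      rw [div_mul_cancel₀ _ (by positivity)]
    · have : ∀ τ, Q τ * (1 + Real.sqrt ε * (r τ - μ) / σ) * r τ
          = Q τ * r τ + (Real.sqrt ε / σ) * (Q τ * (r τ - μ) * r τ) := fun τ => by
        field_simp
      rw [Finset.sum_congr rfl fun τ _ => this τ, Finset.sum_add_distrib, ← Finset.mul_sum,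
        h2, ← hμ]
      have : Real.sqrt ε / σ * σ ^ 2 = σ * Real.sqrt ε := by field_simp
      rw [this]
  · intro P hP0 hP1 hPχ
    set a : T → ℝ := fun τ => (P τ - Q τ) / Real.sqrt (Q τ) with ha
    set b : T → ℝ := fun τ => Real.sqrt (Q τ) * (r τ - μ) with hb
    have hab : ∀ τ, a τ * b τ = (P τ - Q τ) * (r τ - μ) := fun τ => by
      have : Real.sqrt (Q τ) ≠ 0 := (Real.sqrt_pos.2 (hQ0 τ)).ne'
      show (P τ - Q τ) / Real.sqrt (Q τ) * (Real.sqrt (Q τ) * (r τ - μ)) = _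
      rw [div_mul_eq_mul_div, div_eq_iff this]; ring
    have ha2 : ∀ τ, a τ ^ 2 = (P τ - Q τ) ^ 2 / Q τ := fun τ => by
      rw [ha, div_pow, Real.sq_sqrt (hQ0 τ).le]
    have hb2 : ∀ τ, b τ ^ 2 = Q τ * (r τ - μ) ^ 2 := fun τ => by
      rw [hb, mul_pow, Real.sq_sqrt (hQ0 τ).le]
    have hCS := Finset.sum_mul_sq_le_sq_mul_sq Finset.univ a b
    rw [Finset.sum_congr rfl fun τ _ => hab τ,
      Finset.sum_congr rfl fun τ _ => ha2 τ,
      Finset.sum_congr rfl fun τ _ => hb2 τ, ← hσ] at hCS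
    have hD : ∑ τ, (P τ - Q τ) * (r τ - μ) = (∑ τ, P τ * r τ) - μ := by
      have : ∀ τ, (P τ - Q τ) * (r τ - μ) = P τ * r τ - Q τ * r τ - μ * P τ + μ * Q τ :=
        fun τ => by ring
      rw [Finset.sum_congr rfl fun τ _ => this τ]
      rw [Finset.sum_add_distrib, Finset.sum_sub_distrib, Finset.sum_sub_distrib,
        ← Finset.mul_sum, ← Finset.mul_sum, hP1, hQ1, ← hμ]
      ring
    rw [hD] at hCS
    have hbound : ((∑ τ, P τ * r τ) - μ) ^ 2 ≤ ε * σ ^ 2 := by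
      have hχ0 : 0 ≤ ∑ τ, (P τ - Q τ) ^ 2 / Q τ :=
        Finset.sum_nonneg fun τ _ => div_nonneg (sq_nonneg _) (hQ0 τ).le
      nlinarith [sq_nonneg σ]
    have : (∑ τ, P τ * r τ) - μ ≤ σ * Real.sqrt ε := by
      nlinarith [sq_nonneg ((∑ τ, P τ * r τ) - μ - σ * Real.sqrt ε),
        sq_nonneg ((∑ τ, P τ * r τ) - μ + σ * Real.sqrt ε),
        mul_nonneg hσpos.le hsε0]
    linarith
end

section
/- For product measures, the total variation distance between n-fold products is bounded via Hellinger tensorization: TV(P^n, Q^n) ≤ sqrt(n · D_H²(P, Q)), where D_H² is the squared Hellinger distance. -/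
open MeasureTheory
open scoped ENNReal

set_option linter.unusedSectionVars false

/-- Total variation distance between two measures:
`TV(P,Q) = sup_B |P(B) - Q(B)|` over measurable sets `B`. -/
noncomputable def tvDist {Ω : Type*} [MeasurableSpace Ω] (P Q : Measure Ω) : ℝ :=
  ⨆ B : { B : Set Ω // MeasurableSet B }, |(P B.1).toReal - (Q B.1).toReal|

/-- The squared Hellinger distance `D_H²(P,Q) = ∫ (√(dP) - √(dQ))²`, computed via
densities with respect to the dominating measure `P + Q`. -/
noncomputable def hellingerSq {Y : Type*} [MeasurableSpace Y] (P Q : Measure Y) : ℝ :=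
  ∫ y, (Real.sqrt ((P.rnDeriv (P + Q)) y).toReal
      - Real.sqrt ((Q.rnDeriv (P + Q)) y).toReal) ^ 2 ∂(P + Q)

/-- ENNReal Hellinger affinity relative to `A + B`. -/
noncomputable def affE {Z : Type*} [MeasurableSpace Z] (A B : Measure Z) : ℝ≥0∞ :=
  ∫⁻ z, (A.rnDeriv (A + B) z * B.rnDeriv (A + B) z) ^ (1/2 : ℝ) ∂(A + B)

-- piece 1: lintegral over pi of product
lemma lintegral_pi_prod {Y : Type*} [MeasurableSpace Y] (μ : Measure Y) [SigmaFinite μ] :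
    ∀ (n : ℕ) (f : Fin n → Y → ℝ≥0∞), (∀ i, Measurable (f i)) →
      ∫⁻ x, ∏ i, f i (x i) ∂(Measure.pi fun _ : Fin n => μ) = ∏ i, ∫⁻ y, f i y ∂μ := by
  intro n
  induction n with
  | zero => intro f hf; simp
  | succ n ih =>
    intro f hf
    have hmp := measurePreserving_piFinSuccAbove (fun _ : Fin (n+1) => μ) 0
    have hemb := (MeasurableEquiv.piFinSuccAbove (fun _ : Fin (n+1) => Y) 0).measurableEmbedding
    have key : ∫⁻ x, ∏ i, f i (x i) ∂(Measure.pi fun _ : Fin (n+1) => μ)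
        = ∫⁻ z : Y × (Fin n → Y), f 0 z.1 * ∏ j : Fin n, f j.succ (z.2 j)
            ∂(μ.prod (Measure.pi fun _ : Fin n => μ)) := by
      rw [← hmp.lintegral_comp_emb hemb
        (fun z => f 0 z.1 * ∏ j : Fin n, f j.succ (z.2 j))]
      refine lintegral_congr fun x => ?_
      simp [MeasurableEquiv.piFinSuccAbove_apply, Fin.removeNth, Fin.tail,
        Fin.prod_univ_succ, Fin.zero_succAbove]
    rw [key, lintegral_prod_mul (f := f 0) (g := fun v : Fin n → Y => ∏ j : Fin n, f j.succ (v j))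
        ((hf 0).aemeasurable)
        (Finset.measurable_prod Finset.univ
          (fun j _ => (hf j.succ).comp (measurable_pi_apply j))).aemeasurable,
      ih (fun j => f j.succ) (fun j => hf j.succ), Fin.prod_univ_succ]

section Pi

variable {Y : Type*} [MeasurableSpace Y] (P Q : Measure Y)
  [IsProbabilityMeasure P] [IsProbabilityMeasure Q] (n : ℕ)

lemma pi_eq_withDensity (R : Measure Y) [IsFiniteMeasure R] (hR : R ≪ P + Q) :
    Measure.pi (fun _ : Fin n => R)
      = (Measure.pi fun _ : Fin n => (P + Q)).withDensity
          (fun x => ∏ i, R.rnDeriv (P + Q) (x i)) := by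
  have hmeas : Measurable (R.rnDeriv (P + Q)) := Measure.measurable_rnDeriv _ _
  refine Measure.pi_eq fun s hs => ?_
  rw [withDensity_apply _ (MeasurableSet.univ_pi hs)]
  have h1 : ∫⁻ x in Set.pi Set.univ s, (∏ i, R.rnDeriv (P + Q) (x i))
          ∂(Measure.pi fun _ : Fin n => (P + Q))
      = ∫⁻ x, ∏ i, (s i).indicator (R.rnDeriv (P + Q)) (x i)
          ∂(Measure.pi fun _ : Fin n => (P + Q)) := by
    rw [← lintegral_indicator (MeasurableSet.univ_pi hs)]
    refine lintegral_congr fun x => ?_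
    by_cases hx : x ∈ Set.pi Set.univ s
    · rw [Set.indicator_of_mem hx]
      exact Finset.prod_congr rfl fun i _ =>
        (Set.indicator_of_mem (hx i (Set.mem_univ i)) _).symm
    · rw [Set.indicator_of_notMem hx]
      obtain ⟨i, hi⟩ : ∃ i, x i ∉ s i := by
        by_contra h; push_neg at h; exact hx fun i _ => h i
      exact (Finset.prod_eq_zero (Finset.mem_univ i)
        (Set.indicator_of_notMem hi _)).symm
  rw [h1, lintegral_pi_prod (P + Q) n _ (fun i => hmeas.indicator (hs i))]
  refine Finset.prod_congr rfl fun i _ => ?_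
  rw [lintegral_indicator (hs i)]
  exact Measure.setLIntegral_rnDeriv hR (s i)

end Pi


lemma affE_eq_lintegral {Z : Type*} [MeasurableSpace Z] (A B : Measure Z)
    [IsFiniteMeasure A] [IsFiniteMeasure B]
    (μ : Measure Z) [SigmaFinite μ] (hA : A ≪ μ) (hB : B ≪ μ) :
    affE A B = ∫⁻ z, (A.rnDeriv μ z * B.rnDeriv μ z) ^ (1/2 : ℝ) ∂μ := by
  have hν : (A + B) ≪ μ := hA.add_left hB
  have hAν : A ≪ A + B := Measure.absolutelyContinuous_of_le (Measure.le_add_right le_rfl)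
  have hBν : B ≪ A + B := Measure.absolutelyContinuous_of_le (Measure.le_add_left le_rfl)
  have chainA := Measure.rnDeriv_mul_rnDeriv (ν := A + B) (κ := μ) hAν
  have chainB := Measure.rnDeriv_mul_rnDeriv (ν := A + B) (κ := μ) hBν
  have hlt := Measure.rnDeriv_lt_top (A + B) μ
  have hmeas : Measurable fun z => (A.rnDeriv (A+B) z * B.rnDeriv (A+B) z) ^ (1/2 : ℝ) :=
    ((Measure.measurable_rnDeriv _ _).mul (Measure.measurable_rnDeriv _ _)).pow_const _
  calc affE A B
      = ∫⁻ z, (A.rnDeriv (A+B) z * B.rnDeriv (A+B) z) ^ (1/2 : ℝ)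
          ∂(μ.withDensity ((A+B).rnDeriv μ)) := by
        rw [Measure.withDensity_rnDeriv_eq _ _ hν]; rfl
    _ = ∫⁻ z, (A+B).rnDeriv μ z *
          ((A.rnDeriv (A+B) z * B.rnDeriv (A+B) z) ^ (1/2 : ℝ)) ∂μ := by
        rw [lintegral_withDensity_eq_lintegral_mul μ (Measure.measurable_rnDeriv _ _) hmeas]
        rfl
    _ = ∫⁻ z, (A.rnDeriv μ z * B.rnDeriv μ z) ^ (1/2 : ℝ) ∂μ := by
        refine lintegral_congr_ae ?_
        filter_upwards [chainA, chainB, hlt] with z hzA hzB hz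
        rw [← hzA, ← hzB]
        simp only [Pi.mul_apply]
        set a := A.rnDeriv (A+B) z
        set b := B.rnDeriv (A+B) z
        set h := (A+B).rnDeriv μ z
        have : a * h * (b * h) = (a * b) * (h * h) := by ring
        rw [this, ENNReal.mul_rpow_of_nonneg (a*b) (h*h) (by norm_num : (0:ℝ) ≤ 1/2)]
        have hh : (h * h) ^ (1/2 : ℝ) = h := by
          rw [← pow_two, ← ENNReal.rpow_natCast h 2, ← ENNReal.rpow_mul]
          norm_num
        rw [hh, mul_comm]

section Pi

variable {Y : Type*} [MeasurableSpace Y] (P Q : Measure Y)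
  [IsProbabilityMeasure P] [IsProbabilityMeasure Q] (n : ℕ)

lemma affE_pi :
    affE (Measure.pi fun _ : Fin n => P) (Measure.pi fun _ : Fin n => Q) = (affE P Q) ^ n := by
  set μn := Measure.pi fun _ : Fin n => (P + Q) with hμn
  have hp : Measurable (P.rnDeriv (P + Q)) := Measure.measurable_rnDeriv _ _
  have hq : Measurable (Q.rnDeriv (P + Q)) := Measure.measurable_rnDeriv _ _
  have hgP : Measurable fun x : Fin n → Y => ∏ i, P.rnDeriv (P + Q) (x i) :=
    Finset.measurable_prod _ fun i _ => hp.comp (measurable_pi_apply i)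
  have hgQ : Measurable fun x : Fin n → Y => ∏ i, Q.rnDeriv (P + Q) (x i) :=
    Finset.measurable_prod _ fun i _ => hq.comp (measurable_pi_apply i)
  have hP := pi_eq_withDensity P Q n P
    (Measure.absolutelyContinuous_of_le (Measure.le_add_right le_rfl))
  have hQ := pi_eq_withDensity P Q n Q
    (Measure.absolutelyContinuous_of_le (Measure.le_add_left le_rfl))
  have hPac : (Measure.pi fun _ : Fin n => P) ≪ μn := by
    rw [hP]; exact withDensity_absolutelyContinuous _ _
  have hQac : (Measure.pi fun _ : Fin n => Q) ≪ μn := by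
    rw [hQ]; exact withDensity_absolutelyContinuous _ _
  have hdP : (Measure.pi fun _ : Fin n => P).rnDeriv μn
      =ᵐ[μn] fun x => ∏ i, P.rnDeriv (P + Q) (x i) := by
    rw [hP]; exact Measure.rnDeriv_withDensity μn hgP
  have hdQ : (Measure.pi fun _ : Fin n => Q).rnDeriv μn
      =ᵐ[μn] fun x => ∏ i, Q.rnDeriv (P + Q) (x i) := by
    rw [hQ]; exact Measure.rnDeriv_withDensity μn hgQ
  rw [affE_eq_lintegral _ _ μn hPac hQac]
  have : ∫⁻ x, ((Measure.pi fun _ : Fin n => P).rnDeriv μn x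
        * (Measure.pi fun _ : Fin n => Q).rnDeriv μn x) ^ (1/2 : ℝ) ∂μn
      = ∫⁻ x, ∏ i, (P.rnDeriv (P + Q) (x i) * Q.rnDeriv (P + Q) (x i)) ^ (1/2 : ℝ) ∂μn := by
    refine lintegral_congr_ae ?_
    filter_upwards [hdP, hdQ] with x hx1 hx2
    rw [hx1, hx2, ← Finset.prod_mul_distrib,
      ← ENNReal.prod_rpow_of_nonneg (by norm_num : (0:ℝ) ≤ 1/2)]
  rw [this, lintegral_pi_prod (P + Q) n
    (fun _ y => (P.rnDeriv (P + Q) y * Q.rnDeriv (P + Q) y) ^ (1/2 : ℝ))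
    (fun i => (hp.mul hq).pow_const _), Finset.prod_const, Finset.card_univ, Fintype.card_fin]
  rfl

end Pi



lemma sqrt_mul_le_half_add {x y : ℝ} (hx : 0 ≤ x) (hy : 0 ≤ y) :
    Real.sqrt (x * y) ≤ (x + y) / 2 := by
  have ht : 0 ≤ (x + y) / 2 := by positivity
  calc Real.sqrt (x * y) ≤ Real.sqrt (((x + y) / 2) ^ 2) :=
        Real.sqrt_le_sqrt (by nlinarith [sq_nonneg (x - y)])
    _ = (x + y) / 2 := Real.sqrt_sq ht

section Basic

variable {Z : Type*} [MeasurableSpace Z] (A B : Measure Z)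
  [IsProbabilityMeasure A] [IsProbabilityMeasure B]

lemma hA_ac : A ≪ A + B := Measure.absolutelyContinuous_of_le (Measure.le_add_right le_rfl)
lemma hB_ac : B ≪ A + B := Measure.absolutelyContinuous_of_le (Measure.le_add_left le_rfl)

lemma integral_sqrt_mul_eq_toReal_affE :
    ∫ z, Real.sqrt ((A.rnDeriv (A + B) z).toReal * (B.rnDeriv (A + B) z).toReal) ∂(A + B)
      = (affE A B).toReal := by
  rw [affE, ← integral_toReal (f := fun z => (A.rnDeriv (A + B) z * B.rnDeriv (A + B) z) ^ (1/2 : ℝ))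
    (((Measure.measurable_rnDeriv _ _).mul (Measure.measurable_rnDeriv _ _)).pow_const
      _).aemeasurable ?hlt]
  case hlt =>
    filter_upwards [Measure.rnDeriv_lt_top A (A + B), Measure.rnDeriv_lt_top B (A + B)]
      with z h1 h2
    exact ENNReal.rpow_lt_top_of_nonneg (by norm_num) (ENNReal.mul_lt_top h1 h2).ne
  refine integral_congr_ae ?_
  filter_upwards [Measure.rnDeriv_lt_top A (A + B), Measure.rnDeriv_lt_top B (A + B)]
    with z h1 h2
  rw [← ENNReal.toReal_mul, ← ENNReal.toReal_rpow, Real.sqrt_eq_rpow]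

lemma affE_ne_top : affE A B ≠ ⊤ := by
  have : affE A B ≤ ∫⁻ _, 1 ∂(A + B) := by
    refine lintegral_mono_ae ?_
    filter_upwards [Measure.rnDeriv_le_one_of_le (Measure.le_add_right le_rfl : A ≤ A + B),
      Measure.rnDeriv_le_one_of_le (Measure.le_add_left le_rfl : B ≤ A + B)] with z h1 h2
    calc (A.rnDeriv (A + B) z * B.rnDeriv (A + B) z) ^ (1/2 : ℝ)
        ≤ (1 : ℝ≥0∞) ^ (1/2 : ℝ) := by
          refine ENNReal.rpow_le_rpow ?_ (by norm_num)
          calc A.rnDeriv (A + B) z * B.rnDeriv (A + B) z ≤ 1 * 1 := mul_le_mul' h1 h2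
            _ = 1 := by norm_num
      _ = 1 := ENNReal.one_rpow _
  refine ne_top_of_le_ne_top ?_ this
  simpa using (measure_ne_top (A + B) Set.univ)

end Basic

section Basic2

variable {Z : Type*} [MeasurableSpace Z] (A B : Measure Z)
  [IsProbabilityMeasure A] [IsProbabilityMeasure B]

lemma a_le_one : (fun z => (A.rnDeriv (A + B) z).toReal) ≤ᵐ[A + B] fun _ => (1:ℝ) := by
  filter_upwards [Measure.rnDeriv_le_one_of_le (Measure.le_add_right le_rfl : A ≤ A + B)]
    with z hz
  exact ENNReal.toReal_le_of_le_ofReal zero_le_one (by simpa using hz)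

lemma b_le_one : (fun z => (B.rnDeriv (A + B) z).toReal) ≤ᵐ[A + B] fun _ => (1:ℝ) := by
  filter_upwards [Measure.rnDeriv_le_one_of_le (Measure.le_add_left le_rfl : B ≤ A + B)]
    with z hz
  exact ENNReal.toReal_le_of_le_ofReal zero_le_one (by simpa using hz)

lemma int_a : Integrable (fun z => (A.rnDeriv (A + B) z).toReal) (A + B) :=
  Measure.integrable_toReal_rnDeriv

lemma int_b : Integrable (fun z => (B.rnDeriv (A + B) z).toReal) (A + B) := by
  have := Measure.integrable_toReal_rnDeriv (μ := B) (ν := A + B)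
  exact this

lemma int_sqrtab : Integrable
    (fun z => Real.sqrt ((A.rnDeriv (A + B) z).toReal * (B.rnDeriv (A + B) z).toReal))
    (A + B) := by
  refine Integrable.mono' (((int_a A B).add (int_b A B)).div_const 2)
    ((((Measure.measurable_rnDeriv _ _).ennreal_toReal).mul
      ((Measure.measurable_rnDeriv _ _).ennreal_toReal)).sqrt).aestronglyMeasurable ?_
  refine Filter.Eventually.of_forall fun z => ?_
  rw [Real.norm_of_nonneg (Real.sqrt_nonneg _)]
  exact sqrt_mul_le_half_add ENNReal.toReal_nonneg ENNReal.toReal_nonneg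

lemma hellingerSq_eq : hellingerSq A B = 2 - 2 * (affE A B).toReal := by
  have key : ∀ z, (Real.sqrt ((A.rnDeriv (A + B) z).toReal)
        - Real.sqrt ((B.rnDeriv (A + B) z).toReal)) ^ 2
      = (A.rnDeriv (A + B) z).toReal + (B.rnDeriv (A + B) z).toReal
        - 2 * Real.sqrt ((A.rnDeriv (A + B) z).toReal * (B.rnDeriv (A + B) z).toReal) := by
    intro z
    rw [Real.sqrt_mul ENNReal.toReal_nonneg]
    have h1 := Real.sq_sqrt (ENNReal.toReal_nonneg (a := A.rnDeriv (A + B) z))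
    have h2 := Real.sq_sqrt (ENNReal.toReal_nonneg (a := B.rnDeriv (A + B) z))
    nlinarith [h1, h2]
  rw [hellingerSq]
  calc ∫ z, (Real.sqrt ((A.rnDeriv (A + B) z).toReal)
        - Real.sqrt ((B.rnDeriv (A + B) z).toReal)) ^ 2 ∂(A + B)
      = ∫ z, ((A.rnDeriv (A + B) z).toReal + (B.rnDeriv (A + B) z).toReal
        - 2 * Real.sqrt ((A.rnDeriv (A + B) z).toReal * (B.rnDeriv (A + B) z).toReal))
          ∂(A + B) := by
        exact integral_congr_ae (Filter.Eventually.of_forall key)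
    _ = 2 - 2 * (affE A B).toReal := by
        have h1 : Integrable (fun z => (A.rnDeriv (A + B) z).toReal
            + (B.rnDeriv (A + B) z).toReal) (A + B) := (int_a A B).add (int_b A B)
        have h2 : Integrable (fun z => 2 * Real.sqrt ((A.rnDeriv (A + B) z).toReal
            * (B.rnDeriv (A + B) z).toReal)) (A + B) := (int_sqrtab A B).const_mul 2
        rw [integral_sub h1 h2, integral_add (int_a A B) (int_b A B),
          integral_const_mul, integral_sqrt_mul_eq_toReal_affE,
          Measure.integral_toReal_rnDeriv (hA_ac A B),
          Measure.integral_toReal_rnDeriv (hB_ac A B)]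
        simp
        norm_num

lemma toReal_affE_le_one : (affE A B).toReal ≤ 1 := by
  rw [← integral_sqrt_mul_eq_toReal_affE]
  have h2 : (1 : ℝ) = ∫ z, ((A.rnDeriv (A + B) z).toReal + (B.rnDeriv (A + B) z).toReal) / 2
      ∂(A + B) := by
    rw [integral_div, integral_add (int_a A B) (int_b A B),
      Measure.integral_toReal_rnDeriv (hA_ac A B), Measure.integral_toReal_rnDeriv (hB_ac A B)]
    simp
  rw [h2]
  have h3 : Integrable (fun z => ((A.rnDeriv (A + B) z).toReal
      + (B.rnDeriv (A + B) z).toReal) / 2) (A + B) := ((int_a A B).add (int_b A B)).div_const 2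
  refine integral_mono (int_sqrtab A B) h3 fun z => ?_
  exact sqrt_mul_le_half_add ENNReal.toReal_nonneg ENNReal.toReal_nonneg

end Basic2


section TV

variable {Z : Type*} [MeasurableSpace Z] (A B : Measure Z)
  [IsProbabilityMeasure A] [IsProbabilityMeasure B]

lemma hellingerSq_nonneg : 0 ≤ hellingerSq A B :=
  integral_nonneg fun z => sq_nonneg _

lemma tvDist_le_sqrt_hellingerSq : tvDist A B ≤ Real.sqrt (hellingerSq A B) := by
  set a : Z → ℝ := fun z => (A.rnDeriv (A + B) z).toReal with ha
  set b : Z → ℝ := fun z => (B.rnDeriv (A + B) z).toReal with hb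
  have ha0 : ∀ z, 0 ≤ a z := fun z => ENNReal.toReal_nonneg
  have hb0 : ∀ z, 0 ≤ b z := fun z => ENNReal.toReal_nonneg
  have hma : Measurable a := (Measure.measurable_rnDeriv _ _).ennreal_toReal
  have hmb : Measurable b := (Measure.measurable_rnDeriv _ _).ennreal_toReal
  have inta : Integrable a (A + B) := int_a A B
  have intb : Integrable b (A + B) := int_b A B
  have intd : Integrable (fun z => a z - b z) (A + B) := inta.sub intb
  -- Cauchy–Schwarz bound on the L1 distance
  have hCS : ∫ z, |a z - b z| ∂(A + B) ≤ Real.sqrt (hellingerSq A B) * 2 := by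
    set u : Z → ℝ := fun z => |Real.sqrt (a z) - Real.sqrt (b z)| with hu
    set v : Z → ℝ := fun z => Real.sqrt (a z) + Real.sqrt (b z) with hv
    have hueq : ∀ z, |a z - b z| = u z * v z := by
      intro z
      have h1 : a z - b z = (Real.sqrt (a z) - Real.sqrt (b z)) * v z := by
        have := Real.sq_sqrt (ha0 z)
        have := Real.sq_sqrt (hb0 z)
        simp only [hv]; nlinarith
      rw [h1, abs_mul, hu]
      congr 1
      exact abs_of_nonneg (by positivity)
    have hmu : Measurable u := ((hma.sqrt.sub hmb.sqrt)).abs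
    have hmv : Measurable v := hma.sqrt.add hmb.sqrt
    have hle1a : ∀ᵐ z ∂(A + B), a z ≤ 1 := a_le_one A B
    have hle1b : ∀ᵐ z ∂(A + B), b z ≤ 1 := b_le_one A B
    have hubd : ∀ᵐ z ∂(A + B), ‖u z‖ ≤ 1 := by
      filter_upwards [hle1a, hle1b] with z h1 h2
      rw [Real.norm_of_nonneg (abs_nonneg _), abs_sub_le_iff]
      constructor
      · have : Real.sqrt (a z) ≤ 1 := Real.sqrt_le_one.mpr h1
        nlinarith [Real.sqrt_nonneg (b z)]
      · have : Real.sqrt (b z) ≤ 1 := Real.sqrt_le_one.mpr h2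
        nlinarith [Real.sqrt_nonneg (a z)]
    have hvbd : ∀ᵐ z ∂(A + B), ‖v z‖ ≤ 2 := by
      filter_upwards [hle1a, hle1b] with z h1 h2
      have s1 : Real.sqrt (a z) ≤ 1 := Real.sqrt_le_one.mpr h1
      have s2 : Real.sqrt (b z) ≤ 1 := Real.sqrt_le_one.mpr h2
      rw [Real.norm_of_nonneg (by positivity)]
      show Real.sqrt (a z) + Real.sqrt (b z) ≤ 2
      linarith
    have hmemu : MemLp u (ENNReal.ofReal 2) (A + B) :=
      MemLp.of_bound hmu.aestronglyMeasurable 1 hubd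
    have hmemv : MemLp v (ENNReal.ofReal 2) (A + B) :=
      MemLp.of_bound hmv.aestronglyMeasurable 2 hvbd
    have hpq : Real.HolderConjugate 2 2 := by
      constructor <;> norm_num
    have hCS0 := integral_mul_le_Lp_mul_Lq_of_nonneg hpq
      (Filter.Eventually.of_forall fun z => abs_nonneg _)
      (Filter.Eventually.of_forall fun z => by positivity) hmemu hmemv
    have hu2 : ∫ z, u z ^ (2:ℝ) ∂(A + B) = hellingerSq A B := by
      refine integral_congr_ae (Filter.Eventually.of_forall fun z => ?_)
      simp only [hu]
      rw [Real.rpow_two, sq_abs]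
    have hv2 : ∫ z, v z ^ (2:ℝ) ∂(A + B) ≤ 4 := by
      have hptw : ∀ z, v z ^ (2:ℝ) = (a z + b z)
          + 2 * Real.sqrt (a z * b z) := by
        intro z
        rw [Real.rpow_two, Real.sqrt_mul (ha0 z)]
        have h1 := Real.sq_sqrt (ha0 z)
        have h2 := Real.sq_sqrt (hb0 z)
        simp only [hv]; nlinarith
      have h1 : Integrable (fun z => a z + b z) (A + B) := inta.add intb
      have h2 : Integrable (fun z => 2 * Real.sqrt (a z * b z)) (A + B) :=
        (int_sqrtab A B).const_mul 2
      rw [integral_congr_ae (Filter.Eventually.of_forall hptw), integral_add h1 h2,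
        integral_add inta intb, integral_const_mul, ha, hb,
        Measure.integral_toReal_rnDeriv (hA_ac A B),
        Measure.integral_toReal_rnDeriv (hB_ac A B),
        integral_sqrt_mul_eq_toReal_affE A B]
      have := toReal_affE_le_one A B
      simp only [probReal_univ]
      linarith
    have hsq1 : (∫ z, u z ^ (2:ℝ) ∂(A + B)) ^ (1/(2:ℝ)) = Real.sqrt (hellingerSq A B) := by
      rw [hu2, Real.sqrt_eq_rpow]
    have hsq2 : (∫ z, v z ^ (2:ℝ) ∂(A + B)) ^ (1/(2:ℝ)) ≤ 2 := by
      have hnn : 0 ≤ ∫ z, v z ^ (2:ℝ) ∂(A + B) :=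
        integral_nonneg fun z => Real.rpow_nonneg (by positivity) _
      calc (∫ z, v z ^ (2:ℝ) ∂(A + B)) ^ (1/(2:ℝ)) ≤ (4:ℝ) ^ (1/(2:ℝ)) :=
            Real.rpow_le_rpow hnn hv2 (by norm_num)
        _ = 2 := by
            rw [← Real.sqrt_eq_rpow, show (4:ℝ) = 2^2 by norm_num, Real.sqrt_sq (by norm_num)]
    calc ∫ z, |a z - b z| ∂(A + B) = ∫ z, u z * v z ∂(A + B) :=
          integral_congr_ae (Filter.Eventually.of_forall hueq)
      _ ≤ (∫ z, u z ^ (2:ℝ) ∂(A + B)) ^ (1/(2:ℝ)) * (∫ z, v z ^ (2:ℝ) ∂(A + B)) ^ (1/(2:ℝ)) :=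
          hCS0
      _ ≤ Real.sqrt (hellingerSq A B) * 2 := by
          rw [hsq1]
          exact mul_le_mul_of_nonneg_left hsq2 (Real.sqrt_nonneg _)
  -- now bound the sup
  refine ciSup_le fun S => ?_
  obtain ⟨S, hS⟩ := S
  have hAS : ((A S).toReal : ℝ) = ∫ z in S, a z ∂(A + B) :=
    (Measure.setIntegral_toReal_rnDeriv (hA_ac A B) S).symm
  have hBS : ((B S).toReal : ℝ) = ∫ z in S, b z ∂(A + B) :=
    (Measure.setIntegral_toReal_rnDeriv (hB_ac A B) S).symm
  have hIJ : (∫ z in S, (a z - b z) ∂(A + B)) + (∫ z in Sᶜ, (a z - b z) ∂(A + B)) = 0 := by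
    rw [integral_add_compl hS intd, integral_sub inta intb, ha, hb,
      Measure.integral_toReal_rnDeriv (hA_ac A B), Measure.integral_toReal_rnDeriv (hB_ac A B)]
    simp
  have habs : |(A S).toReal - (B S).toReal| ≤ (∫ z, |a z - b z| ∂(A + B)) / 2 := by
    have hI : (A S).toReal - (B S).toReal = ∫ z in S, (a z - b z) ∂(A + B) := by
      rw [hAS, hBS, integral_sub inta.integrableOn intb.integrableOn]
    have h1 : |∫ z in S, (a z - b z) ∂(A + B)| ≤ ∫ z in S, |a z - b z| ∂(A + B) := by
      simpa [Real.norm_eq_abs] using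
        norm_integral_le_integral_norm (μ := (A + B).restrict S) (fun z => a z - b z)
    have h2 : |∫ z in Sᶜ, (a z - b z) ∂(A + B)| ≤ ∫ z in Sᶜ, |a z - b z| ∂(A + B) := by
      simpa [Real.norm_eq_abs] using
        norm_integral_le_integral_norm (μ := (A + B).restrict Sᶜ) (fun z => a z - b z)
    have h3 : (∫ z in S, |a z - b z| ∂(A + B)) + ∫ z in Sᶜ, |a z - b z| ∂(A + B)
        = ∫ z, |a z - b z| ∂(A + B) := integral_add_compl hS intd.abs
    have h4 : |∫ z in Sᶜ, (a z - b z) ∂(A + B)| = |∫ z in S, (a z - b z) ∂(A + B)| := by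
      rw [show (∫ z in Sᶜ, (a z - b z) ∂(A + B)) = -(∫ z in S, (a z - b z) ∂(A + B)) by
        linarith, abs_neg]
    rw [hI]
    linarith [abs_nonneg (∫ z in S, (a z - b z) ∂(A + B))]
  calc |(A S).toReal - (B S).toReal| ≤ (∫ z, |a z - b z| ∂(A + B)) / 2 := habs
    _ ≤ Real.sqrt (hellingerSq A B) * 2 / 2 := by linarith
    _ = Real.sqrt (hellingerSq A B) := by ring

end TV

lemma one_sub_pow_le_nat_mul {ρ : ℝ} (h0 : 0 ≤ ρ) (h1 : ρ ≤ 1) (n : ℕ) :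
    1 - ρ ^ n ≤ n * (1 - ρ) := by
  induction n with
  | zero => simp
  | succ n ih =>
    have hρn : ρ ^ n ≤ 1 := pow_le_one₀ h0 h1
    have hρn0 : 0 ≤ ρ ^ n := pow_nonneg h0 n
    have hpow : ρ ^ (n + 1) = ρ * ρ ^ n := by ring
    push_cast
    nlinarith

/-- Hellinger tensorization bound on total variation of product measures:
`TV(P^n, Q^n) ≤ sqrt(n · D_H²(P, Q))`. -/
theorem stmt_18 {Y : Type*} [MeasurableSpace Y] (P Q : Measure Y)
    [IsProbabilityMeasure P] [IsProbabilityMeasure Q] (n : ℕ) :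
    tvDist (Measure.pi fun _ : Fin n => P) (Measure.pi fun _ : Fin n => Q)
      ≤ Real.sqrt (n * hellingerSq P Q) := by
  set ρ : ℝ := (affE P Q).toReal with hρ
  have hρ0 : 0 ≤ ρ := ENNReal.toReal_nonneg
  have hρ1 : ρ ≤ 1 := toReal_affE_le_one P Q
  have hPn : hellingerSq (Measure.pi fun _ : Fin n => P) (Measure.pi fun _ : Fin n => Q)
      = 2 - 2 * ρ ^ n := by
    rw [hellingerSq_eq, affE_pi, ENNReal.toReal_pow]
  have h1 : hellingerSq P Q = 2 - 2 * ρ := hellingerSq_eq P Q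
  calc tvDist (Measure.pi fun _ : Fin n => P) (Measure.pi fun _ : Fin n => Q)
      ≤ Real.sqrt (hellingerSq (Measure.pi fun _ : Fin n => P)
          (Measure.pi fun _ : Fin n => Q)) := tvDist_le_sqrt_hellingerSq _ _
    _ ≤ Real.sqrt (n * hellingerSq P Q) := by
        refine Real.sqrt_le_sqrt ?_
        rw [hPn, h1]
        have := one_sub_pow_le_nat_mul hρ0 hρ1 n
        nlinarith
end
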